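/- Let X and R be finite types with 2 ≤ Fintype.card X, let κ : X ≃ R be a bijection, and let M : Matrix X X ℝ have all diagonal entries strictly negative and all off-diagonal entries nonnegative. Define the König graph K(κ) as the directed graph on the vertex type X ⊕ R whose only edges are Sum.inl x → Sum.inr r exactly when r = κ x, and Sum.inr r → Sum.inl y exactly when 0 < M (κ.symm r) y. Then K(κ) is a strong block — i.e., it is strongly connected AND has no cut vertex (for every vertex v₀ and all a, b ≠ v₀, a and b are joined by a walk in the symmetrized edge relation avoiding v₀) — if and only if M is irreducible. -/

import Mathlib

/-- A square real matrix is *irreducible* if there is no nonempty proper subset `S`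
of indices with `M x y = 0` for all `x ∈ S`, `y ∉ S`. -/
def MatIrreducible {X : Type*} (M : Matrix X X ℝ) : Prop :=
  ¬ ∃ S : Set X, S.Nonempty ∧ S ≠ Set.univ ∧ ∀ x ∈ S, ∀ y ∉ S, M x y = 0

/-- The König graph `K(κ)` of a Child-Selection `κ` with Metzler part `M`:
edges are `x → κ x` (species to its selected reaction) and `r → y` whenever
`0 < M (κ.symm r) y` (reaction to product). -/
def KonigAdj {X R : Type*} (κ : X ≃ R) (M : Matrix X X ℝ) :
    (X ⊕ R) → (X ⊕ R) → Prop
  | Sum.inl x, Sum.inr r => r = κ x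
  | Sum.inr r, Sum.inl y => 0 < M (κ.symm r) y
  | _, _ => False

/-- The König graph `K(κ)` is a strong block (strongly connected and without cut
vertex) if and only if the Metzler part `M` is irreducible. -/
theorem konig_strong_block_iff_irreducible
    {X R : Type*} [Fintype X] [Fintype R]
    (hcard : 2 ≤ Fintype.card X)
    (κ : X ≃ R) (M : Matrix X X ℝ)
    (hdiag : ∀ x, M x x < 0)
    (hMetzler : ∀ x y, x ≠ y → 0 ≤ M x y) :
    ((∀ u v : X ⊕ R, Relation.ReflTransGen (KonigAdj κ M) u v) ∧
     (∀ v₀ a b : X ⊕ R, a ≠ v₀ → b ≠ v₀ →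
        Relation.ReflTransGen
          (fun u w => u ≠ v₀ ∧ w ≠ v₀ ∧ (KonigAdj κ M u w ∨ KonigAdj κ M w u)) a b))
    ↔ MatIrreducible M := by
  set G : X → X → Prop := fun x y => 0 < M x y with hGdef
  constructor
  · -- strong block → irreducible
    rintro ⟨h1, -⟩ ⟨S, ⟨x, hx⟩, hSne, hS⟩
    obtain ⟨y, hy⟩ : ∃ y, y ∉ S := by
      by_contra h; push_neg at h; exact hSne (Set.eq_univ_iff_forall.2 h)
    -- the set T of vertices "in S" is closed under KonigAdj
    have step : ∀ u v, KonigAdj κ M u v →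
        Sum.elim (· ∈ S) (fun r => κ.symm r ∈ S) u →
        Sum.elim (· ∈ S) (fun r => κ.symm r ∈ S) v := by
      rintro (x' | r') (y' | r'') h hu
      · exact h.elim
      · have h' : r'' = κ x' := h
        subst h'; simpa using hu
      · have h' : 0 < M (κ.symm r') y' := h
        by_contra hy'
        exact absurd (hS _ hu _ hy') (ne_of_gt h')
      · exact h.elim
    have key : ∀ v : X ⊕ R, Relation.ReflTransGen (KonigAdj κ M) (Sum.inl x) v →
        Sum.elim (· ∈ S) (fun r => κ.symm r ∈ S) v := by
      intro v h
      induction h with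
      | refl => exact hx
      | tail _ hstep ih => exact step _ _ hstep ih
    exact hy (key (Sum.inl y) (h1 _ _))
  · -- irreducible → strong block
    intro hirr
    have hreach : ∀ x y : X, Relation.ReflTransGen G x y := by
      intro x y
      by_contra hxy
      apply hirr
      refine ⟨{z | Relation.ReflTransGen G x z}, ⟨x, Relation.ReflTransGen.refl⟩, ?_, ?_⟩
      · intro h
        exact hxy (Set.eq_univ_iff_forall.1 h y)
      · intro a ha b hb
        by_contra hMab
        have hab : a ≠ b := by rintro rfl; exact hb ha
        have hle := hMetzler a b hab
        have hG : G a b := lt_of_le_of_ne hle (Ne.symm hMab)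
        exact hb (ha.tail hG)
    have hout : ∀ x : X, ∃ y, G x y := by
      intro x
      obtain ⟨y, hy⟩ := Fintype.exists_ne_of_one_lt_card hcard x
      rcases (hreach x y).cases_head with h | ⟨w, hw, -⟩
      · exact absurd h.symm hy
      · exact ⟨w, hw⟩
    -- lift of G-paths to the König graph
    have hlift : ∀ x y : X,
        Relation.ReflTransGen (KonigAdj κ M) (Sum.inl x) (Sum.inl y) := by
      intro x y
      induction hreach x y with
      | refl => exact Relation.ReflTransGen.refl
      | @tail b c hab hbc ih =>
        exact (ih.tail (show KonigAdj κ M (Sum.inl b) (Sum.inr (κ b)) from rfl)).tail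
          (show KonigAdj κ M (Sum.inr (κ b)) (Sum.inl c) from show 0 < M (κ.symm (κ b)) c by simpa using hbc)
    constructor
    · -- strong connectivity
      rintro (x | r) (y | r')
      · exact hlift x y
      · exact (hlift x (κ.symm r')).tail
          (show r' = κ (κ.symm r') from (κ.apply_symm_apply r').symm)
      · obtain ⟨w, hw⟩ := hout (κ.symm r)
        exact (Relation.ReflTransGen.single
          (show KonigAdj κ M (Sum.inr r) (Sum.inl w) from hw)).trans (hlift w y)
      · obtain ⟨w, hw⟩ := hout (κ.symm r)
        exact ((Relation.ReflTransGen.single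
          (show KonigAdj κ M (Sum.inr r) (Sum.inl w) from hw)).trans (hlift w (κ.symm r'))).tail
          (show r' = κ (κ.symm r') from (κ.apply_symm_apply r').symm)
    · -- no cut vertex
      intro v₀ a b ha hb
      have hsym : Symmetric (fun u w => u ≠ v₀ ∧ w ≠ v₀ ∧
          (KonigAdj κ M u w ∨ KonigAdj κ M w u)) :=
        fun _ _ h => ⟨h.2.1, h.1, h.2.2.symm⟩
      set A : (X ⊕ R) → (X ⊕ R) → Prop := fun u w => u ≠ v₀ ∧ w ≠ v₀ ∧
          (KonigAdj κ M u w ∨ KonigAdj κ M w u) with hAdef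
      -- it suffices to find a hub to which every vertex ≠ v₀ connects
      suffices hhub : ∃ hub : X ⊕ R, ∀ v : X ⊕ R, v ≠ v₀ →
          Relation.ReflTransGen A v hub by
        obtain ⟨hub, hh⟩ := hhub
        exact (hh a ha).trans (((@Relation.ReflTransGen.symmetric _ A ⟨hsym⟩).symm _ _) (hh b hb))
      rcases v₀ with x₀ | r₀
      · -- removed a species: hub is the reaction κ x₀
        refine ⟨Sum.inr (κ x₀), ?_⟩
        have claimA : ∀ z : X, z ≠ x₀ →
            Relation.ReflTransGen A (Sum.inl z) (Sum.inr (κ x₀)) := by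
          intro z
          induction hreach x₀ z with
          | refl => exact fun h => absurd rfl h
          | @tail m c hm hmc ih =>
            intro hc
            by_cases hmx : m = x₀
            · subst hmx
              exact Relation.ReflTransGen.single
                (show A (Sum.inl c) (Sum.inr (κ m)) from
                  ⟨fun h => hc (Sum.inl.inj h), Sum.inr_ne_inl,
                   Or.inr (show 0 < M (κ.symm (κ m)) c by simpa using hmc)⟩)
            · exact (Relation.ReflTransGen.single
                (show A (Sum.inl c) (Sum.inr (κ m)) from
                  ⟨fun h => hc (Sum.inl.inj h), Sum.inr_ne_inl,
                   Or.inr (show 0 < M (κ.symm (κ m)) c by simpa using hmc)⟩)).trans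
                ((Relation.ReflTransGen.single
                  (show A (Sum.inr (κ m)) (Sum.inl m) from
                    ⟨Sum.inr_ne_inl, fun h => hmx (Sum.inl.inj h), Or.inr rfl⟩)).trans
                  (ih hmx))
        rintro (z | r) hv
        · exact claimA z (fun h => hv (congrArg Sum.inl h))
        · by_cases hz : κ.symm r = x₀
          · have : r = κ x₀ := by rw [← hz, κ.apply_symm_apply]
            rw [this]
          · exact (Relation.ReflTransGen.single
              (show A (Sum.inr r) (Sum.inl (κ.symm r)) from
                ⟨Sum.inr_ne_inl, fun h => hz (Sum.inl.inj h),
                 Or.inr (show r = κ (κ.symm r) from (κ.apply_symm_apply r).symm)⟩)).trans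
              (claimA _ hz)
      · -- removed a reaction: hub is the species κ.symm r₀
        refine ⟨Sum.inl (κ.symm r₀), ?_⟩
        have claimB : ∀ z : X,
            Relation.ReflTransGen A (Sum.inl z) (Sum.inl (κ.symm r₀)) := by
          intro z
          refine Relation.ReflTransGen.head_induction_on
            (motive := fun a _ => Relation.ReflTransGen A (Sum.inl a) (Sum.inl (κ.symm r₀)))
            (hreach z (κ.symm r₀)) Relation.ReflTransGen.refl ?_
          intro m c hmc _ ih
          by_cases hmx : m = κ.symm r₀
          · rw [hmx]
          · have hκm : κ m ≠ r₀ := by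
              intro h
              exact hmx (by rw [← h, κ.symm_apply_apply])
            exact (Relation.ReflTransGen.single
              (show A (Sum.inl m) (Sum.inr (κ m)) from
                ⟨Sum.inl_ne_inr, fun h => hκm (Sum.inr.inj h), Or.inl rfl⟩)).trans
              ((Relation.ReflTransGen.single
                (show A (Sum.inr (κ m)) (Sum.inl c) from
                  ⟨fun h => hκm (Sum.inr.inj h), Sum.inl_ne_inr,
                   Or.inl (show 0 < M (κ.symm (κ m)) c by simpa using hmc)⟩)).trans ih)
        rintro (z | r) hv
        · exact claimB z
        · exact (Relation.ReflTransGen.single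
            (show A (Sum.inr r) (Sum.inl (κ.symm r)) from
              ⟨hv, Sum.inl_ne_inr,
               Or.inr (show r = κ (κ.symm r) from (κ.apply_symm_apply r).symm)⟩)).trans
            (claimB _)
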